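/- Let α = u + iv with u ∈ (0,1) and v > 0, and suppose t₁, t₂ ∈ (0, 2π) satisfy t₁ ≠ t₂ and β_α(t₁) = β_α(t₂). Then there exists k ∈ ℤ such that (t₁ − t₂)·(2u − u² − v²) = 4kπu. -/
import Mathlib


open Real Complex

lemma one_sub_exp_eq (t : ℝ) (ht : t ∈ Set.Ioo 0 (2 * Real.pi)) :
    1 - Complex.exp (-(Complex.I * t)) =
      Complex.exp (↑(Real.log (2 * Real.sin (t / 2))) + ↑((Real.pi - t) / 2) * Complex.I) := by
  have hs : 0 < Real.sin (t / 2) :=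
    Real.sin_pos_of_pos_of_lt_pi (by linarith [ht.1]) (by linarith [ht.2])
  have hpos : (0:ℝ) < 2 * Real.sin (t / 2) := by linarith
  rw [Complex.exp_add, ← Complex.ofReal_exp, Real.exp_log hpos, Complex.exp_mul_I]
  have h1 : -(Complex.I * (t:ℂ)) = ((-t : ℝ):ℂ) * Complex.I := by push_cast; ring
  rw [h1, Complex.exp_mul_I, ← Complex.ofReal_cos, ← Complex.ofReal_sin,
    ← Complex.ofReal_cos, ← Complex.ofReal_sin]
  have hc : Real.cos ((Real.pi - t)/2) = Real.sin (t/2) := by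
    rw [show (Real.pi - t)/2 = Real.pi/2 - t/2 by ring, Real.cos_pi_div_two_sub]
  have hsn : Real.sin ((Real.pi - t)/2) = Real.cos (t/2) := by
    rw [show (Real.pi - t)/2 = Real.pi/2 - t/2 by ring, Real.sin_pi_div_two_sub]
  rw [hc, hsn, Real.cos_neg, Real.sin_neg]
  have h2 : Real.cos t = 1 - 2 * Real.sin (t/2)^2 := by
    have h := Real.cos_sq (t/2)
    rw [show 2*(t/2) = t by ring] at h
    nlinarith [Real.sin_sq_add_cos_sq (t/2)]
  have h3 : Real.sin t = 2 * Real.sin (t/2) * Real.cos (t/2) := by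
    have h := Real.sin_two_mul (t/2)
    rwa [show 2*(t/2) = t by ring] at h
  apply Complex.ext <;>
    simp only [Complex.sub_re, Complex.sub_im, Complex.add_re, Complex.add_im,
      Complex.mul_re, Complex.mul_im, Complex.ofReal_re, Complex.ofReal_im,
      Complex.I_re, Complex.I_im, Complex.one_re, Complex.one_im, Complex.neg_re,
      Complex.neg_im] <;> nlinarith [h2, h3]

/-- The boundary curve `β_α(t) = e^{it} (1 - e^{-it})^α` (principal branch). -/
noncomputable def betaCurve (α : ℂ) (t : ℝ) : ℂ :=
  Complex.exp (Complex.I * t) * (1 - Complex.exp (-(Complex.I * t))) ^ α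

lemma betaCurve_eq (α : ℂ) (t : ℝ) (ht : t ∈ Set.Ioo 0 (2 * Real.pi)) :
    betaCurve α t =
      Complex.exp (Complex.I * t +
        (↑(Real.log (2 * Real.sin (t / 2))) + ↑((Real.pi - t) / 2) * Complex.I) * α) := by
  rw [betaCurve, one_sub_exp_eq t ht, Complex.cpow_def_of_ne_zero (Complex.exp_ne_zero _),
    Complex.log_exp, ← Complex.exp_add] <;>
  · simp only [Complex.add_im, Complex.ofReal_im, Complex.mul_im, Complex.ofReal_re,
      Complex.I_im, Complex.I_re, mul_one, mul_zero]
    have := Real.pi_pos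
    obtain ⟨h1, h2⟩ := ht
    linarith

/-- If the boundary curve for `α = u + iv`, `u ∈ (0,1)`, `v > 0` has a self-intersection
`β_α(t₁) = β_α(t₂)` with `t₁ ≠ t₂`, then `(t₁ - t₂)(2u - u² - v²) = 4kπu` for some `k ∈ ℤ`. -/
theorem betaCurve_self_intersection (u v : ℝ) (hu : u ∈ Set.Ioo (0 : ℝ) 1) (hv : 0 < v)
    (t₁ t₂ : ℝ) (ht₁ : t₁ ∈ Set.Ioo 0 (2 * Real.pi)) (ht₂ : t₂ ∈ Set.Ioo 0 (2 * Real.pi))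
    (hne : t₁ ≠ t₂)
    (heq : betaCurve (u + v * Complex.I) t₁ = betaCurve (u + v * Complex.I) t₂) :
    ∃ k : ℤ, (t₁ - t₂) * (2 * u - u ^ 2 - v ^ 2) = 4 * k * Real.pi * u := by
  rw [betaCurve_eq _ _ ht₁, betaCurve_eq _ _ ht₂, Complex.exp_eq_exp_iff_exists_int] at heq
  obtain ⟨n, hn⟩ := heq
  refine ⟨n, ?_⟩
  have hre := congrArg Complex.re hn
  have him := congrArg Complex.im hn
  simp only [Complex.add_re, Complex.add_im, Complex.mul_re, Complex.mul_im,
    Complex.ofReal_re, Complex.ofReal_im, Complex.I_re, Complex.I_im,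
    Complex.intCast_re, Complex.intCast_im, Complex.re_ofNat, Complex.im_ofNat,
    mul_zero, mul_one, zero_mul, one_mul, sub_zero, zero_sub, add_zero, zero_add,
    neg_zero, neg_neg] at hre him
  linear_combination (2*u) * him - (2*v) * hre
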